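/- arXiv:math/0510475 — 3 statements merged into one kernel-verified Lean document; each statement's English description precedes it below -/
import Mathlib

section
/- Let K be a field equipped with an involution k ↦ k̄, and extend it to an involution on the Laurent polynomial ring by (k t^l)‾ = t^{-l} k̄, and further to the rational function field K(t). If τ ∈ K(t)^× satisfies τ = k t^j · τ̄ for some k ∈ K^× and j ∈ ℤ, then deg(τ) ≡ j (mod 2), where deg(f/g) = deg(f) - deg(g) extends the degree (highest minus lowest exponent) on nonzero Laurent polynomials. -/
open LaurentPolynomial

/-- The lowest exponent occurring in a Laurent polynomial (junk value `0` for `f = 0`). -/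
noncomputable def lowExp {K : Type*} [Field K] (f : LaurentPolynomial K) : ℤ :=
  WithTop.untopD 0 f.coeff.support.min

/-- The highest exponent occurring in a Laurent polynomial (junk value `0` for `f = 0`). -/
noncomputable def highExp {K : Type*} [Field K] (f : LaurentPolynomial K) : ℤ :=
  WithBot.unbotD 0 f.coeff.support.max

/-- The degree of a nonzero Laurent polynomial: highest minus lowest exponent. -/
noncomputable def degL {K : Type*} [Field K] (f : LaurentPolynomial K) : ℤ :=
  highExp f - lowExp f

section Aux

variable {K : Type*} [Field K]

lemma supp_ne (f : LaurentPolynomial K) (hf : f ≠ 0) : f.coeff.support.Nonempty :=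
  Finsupp.support_nonempty_iff.mpr (fun h => hf (by rw [← AddMonoidAlgebra.ofCoeff_coeff f, h]; rfl))

lemma highExp_eq (f : LaurentPolynomial K) (hf : f ≠ 0) :
    highExp f = f.coeff.support.max' (supp_ne f hf) := by
  rw [highExp, ← Finset.coe_max' (supp_ne f hf), WithBot.unbotD_coe]

lemma lowExp_eq (f : LaurentPolynomial K) (hf : f ≠ 0) :
    lowExp f = f.coeff.support.min' (supp_ne f hf) := by
  rw [lowExp, ← Finset.coe_min' (supp_ne f hf), WithTop.untopD_coe]

lemma coeff_mul_top (f g : LaurentPolynomial K) (a b : ℤ)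
    (ha : ∀ x ∈ f.coeff.support, x ≤ a) (hb : ∀ y ∈ g.coeff.support, y ≤ b) :
    (f * g).coeff (a + b) = f.coeff a * g.coeff b := by
  classical
  rw [AddMonoidAlgebra.coeff_mul, Finsupp.sum, Finset.sum_eq_single a]
  · rw [Finsupp.sum, Finset.sum_eq_single b]
    · rw [if_pos rfl]
    · intro y hy hyb
      exact if_neg (by have := hb y hy; omega)
    · intro hbno
      rw [if_pos rfl, Finsupp.notMem_support_iff.mp hbno, mul_zero]
  · intro x hx hxa
    apply Finset.sum_eq_zero
    intro y hy
    exact if_neg (by have h1 := ha x hx; have := hb y hy; omega)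
  · intro hano
    apply Finset.sum_eq_zero
    intro y hy
    have h0 : f.coeff a = 0 := Finsupp.notMem_support_iff.mp hano
    simp [h0]

lemma highExp_mul (f g : LaurentPolynomial K) (hf : f ≠ 0) (hg : g ≠ 0) :
    f * g ≠ 0 ∧ highExp (f * g) = highExp f + highExp g := by
  classical
  set a := f.coeff.support.max' (supp_ne f hf) with hadef
  set b := g.coeff.support.max' (supp_ne g hg) with hbdef
  have hcoeff : (f * g).coeff (a + b) = f.coeff a * g.coeff b :=
    coeff_mul_top f g a b (fun x hx => Finset.le_max' _ _ hx) (fun y hy => Finset.le_max' _ _ hy)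
  have hne : (f * g).coeff (a + b) ≠ 0 := by
    rw [hcoeff]
    exact mul_ne_zero (Finsupp.mem_support_iff.mp (Finset.max'_mem _ _))
      (Finsupp.mem_support_iff.mp (Finset.max'_mem _ _))
  have hmem : a + b ∈ (f * g).coeff.support := Finsupp.mem_support_iff.mpr hne
  have hfg : f * g ≠ 0 := by
    intro h
    rw [h] at hmem
    simp at hmem
  refine ⟨hfg, ?_⟩
  rw [highExp_eq _ hf, highExp_eq _ hg, highExp_eq _ hfg]
  apply le_antisymm
  · apply Finset.max'_le
    intro c hc
    obtain ⟨x, hx, y, hy, rfl⟩ := Finset.mem_add.mp (AddMonoidAlgebra.support_coeff_mul_subset f g hc)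
    exact add_le_add (Finset.le_max' _ _ hx) (Finset.le_max' _ _ hy)
  · exact Finset.le_max' _ _ hmem

/-- the "bar" involution on Laurent polynomials -/
noncomputable def barL (ι : K ≃+* K) (f : LaurentPolynomial K) : LaurentPolynomial K :=
  AddMonoidAlgebra.ofCoeff (Finsupp.equivMapDomain (Equiv.neg ℤ) (Finsupp.mapRange ι ι.map_zero f.coeff))

lemma barL_apply (ι : K ≃+* K) (f : LaurentPolynomial K) (n : ℤ) :
    (barL ι f).coeff n = ι (f.coeff (-n)) := by
  simp [barL, Finsupp.equivMapDomain_apply]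

lemma barL_add (ι : K ≃+* K) (f g : LaurentPolynomial K) :
    barL ι (f + g) = barL ι f + barL ι g := by
  apply AddMonoidAlgebra.coeff_injective
  ext n
  rw [barL_apply]
  rw [AddMonoidAlgebra.coeff_add, AddMonoidAlgebra.coeff_add, Finsupp.add_apply, Finsupp.add_apply]
  rw [map_add, barL_apply, barL_apply]

lemma barL_single (ι : K ≃+* K) (n : ℤ) (a : K) :
    barL ι (AddMonoidAlgebra.single n a) = AddMonoidAlgebra.single (-n) (ι a) := by
  apply AddMonoidAlgebra.coeff_injective
  ext m
  rw [barL_apply, AddMonoidAlgebra.coeff_single, AddMonoidAlgebra.coeff_single, Finsupp.single_apply, Finsupp.single_apply]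
  rcases eq_or_ne m (-n) with rfl | hm
  · rw [if_pos (by omega), if_pos (by omega)]
  · rw [if_neg (by omega), if_neg (by omega), map_zero]

lemma barL_support (ι : K ≃+* K) (f : LaurentPolynomial K) :
    (barL ι f).coeff.support = f.coeff.support.image Neg.neg := by
  ext n
  simp only [Finsupp.mem_support_iff, barL_apply, Finset.mem_image]
  constructor
  · intro h
    exact ⟨-n, by simpa using (fun hz => h (by rw [hz, map_zero])), by simp⟩
  · rintro ⟨m, hm, rfl⟩
    simpa using fun hz => hm (by simpa using (ι.injective (by simpa using hz)))

lemma barL_ne_zero (ι : K ≃+* K) (f : LaurentPolynomial K) (hf : f ≠ 0) : barL ι f ≠ 0 := by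
  intro h
  have := barL_support ι f
  rw [h] at this
  obtain ⟨x, hx⟩ := supp_ne f hf
  have : -x ∈ (0 : LaurentPolynomial K).coeff.support := by
    rw [this]; exact Finset.mem_image_of_mem _ hx
  simp at this

lemma highExp_barL (ι : K ≃+* K) (f : LaurentPolynomial K) (hf : f ≠ 0) :
    highExp (barL ι f) = -lowExp f := by
  rw [highExp_eq _ (barL_ne_zero ι f hf), lowExp_eq _ hf]
  apply le_antisymm
  · apply Finset.max'_le
    intro c hc
    rw [barL_support] at hc
    obtain ⟨m, hm, rfl⟩ := Finset.mem_image.mp hc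
    have := Finset.min'_le _ _ hm
    omega
  · apply Finset.le_max'
    rw [barL_support]
    exact Finset.mem_image_of_mem _ (Finset.min'_mem _ _)

lemma highExp_CT (k : K) (hk : k ≠ 0) (j : ℤ) : highExp (C k * T j : LaurentPolynomial K) = j := by
  rw [highExp, LaurentPolynomial.support_coeff_C_mul_T_of_ne_zero hk, Finset.max_singleton,
    WithBot.unbotD_coe]

lemma CT_ne_zero (k : K) (hk : k ≠ 0) (j : ℤ) : (C k * T j : LaurentPolynomial K) ≠ 0 := by
  intro h
  have := LaurentPolynomial.support_coeff_C_mul_T_of_ne_zero hk j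
  rw [h] at this
  simp only [AddMonoidAlgebra.coeff_zero, Finsupp.support_zero] at this
  exact Finset.singleton_ne_empty j this.symm

end Aux

set_option maxHeartbeats 1000000 in
set_option synthInstance.maxHeartbeats 1000000 in
lemma sigma_barL {K : Type*} [Field K] (ι : K ≃+* K)
    (σ : FractionRing (LaurentPolynomial K) ≃+* FractionRing (LaurentPolynomial K))
    (hσ : ∀ (k : K) (l : ℤ),
      σ (algebraMap (LaurentPolynomial K) (FractionRing (LaurentPolynomial K))
          (LaurentPolynomial.C k * LaurentPolynomial.T l)) =
        algebraMap (LaurentPolynomial K) (FractionRing (LaurentPolynomial K))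
          (LaurentPolynomial.C (ι k) * LaurentPolynomial.T (-l)))
    (f : LaurentPolynomial K) :
    σ (algebraMap (LaurentPolynomial K) (FractionRing (LaurentPolynomial K)) f) =
      algebraMap (LaurentPolynomial K) (FractionRing (LaurentPolynomial K)) (barL ι f) := by
  induction f using AddMonoidAlgebra.induction with
  | zero =>
    have h0 : barL ι 0 = 0 := by
      apply AddMonoidAlgebra.coeff_injective; ext n; rw [barL_apply]; simp
    rw [h0, map_zero, map_zero]
  | single_add n a f hn hb ih =>
    rw [map_add, map_add, ih, barL_add, map_add, barL_single, single_eq_C_mul_T,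
      single_eq_C_mul_T, hσ]

set_option maxHeartbeats 1000000 in
set_option synthInstance.maxHeartbeats 1000000 in
/-- Let `K` be a field with involution `ι`, extended to an involution `σ` of
`K(t)` by `(k tˡ)‾ = t⁻ˡ k̄`.  If `τ = k tʲ · σ(τ)` for some `k ∈ K^×`, `j ∈ ℤ`, then
`deg τ ≡ j (mod 2)`, where `deg(p/q) = deg p - deg q`. -/
theorem deg_parity_of_selfdual {K : Type*} [Field K]
    (ι : K ≃+* K) (hι : ∀ x, ι (ι x) = x)
    (σ : FractionRing (LaurentPolynomial K) ≃+* FractionRing (LaurentPolynomial K))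
    (hσ : ∀ (k : K) (l : ℤ),
      σ (algebraMap (LaurentPolynomial K) (FractionRing (LaurentPolynomial K))
          (LaurentPolynomial.C k * LaurentPolynomial.T l)) =
        algebraMap (LaurentPolynomial K) (FractionRing (LaurentPolynomial K))
          (LaurentPolynomial.C (ι k) * LaurentPolynomial.T (-l)))
    (k : K) (hk : k ≠ 0) (j : ℤ) (p q : LaurentPolynomial K) (hp : p ≠ 0) (hq : q ≠ 0)
    (hτ : algebraMap (LaurentPolynomial K) (FractionRing (LaurentPolynomial K)) p /
            algebraMap (LaurentPolynomial K) (FractionRing (LaurentPolynomial K)) q =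
          algebraMap (LaurentPolynomial K) (FractionRing (LaurentPolynomial K))
              (LaurentPolynomial.C k * LaurentPolynomial.T j) *
            σ (algebraMap (LaurentPolynomial K) (FractionRing (LaurentPolynomial K)) p /
               algebraMap (LaurentPolynomial K) (FractionRing (LaurentPolynomial K)) q)) :
    degL p - degL q ≡ j [ZMOD 2] := by
  classical
  set A := algebraMap (LaurentPolynomial K) (FractionRing (LaurentPolynomial K)) with hA
  have hinj : Function.Injective A := IsFractionRing.injective _ _
  have hAq : A q ≠ 0 := fun h => hq (hinj (by rw [h, map_zero]))
  have hbq : barL ι q ≠ 0 := barL_ne_zero ι q hq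
  have hbp : barL ι p ≠ 0 := barL_ne_zero ι p hp
  have hAbq : A (barL ι q) ≠ 0 := fun h => hbq (hinj (by rw [h, map_zero]))
  rw [map_div₀, sigma_barL ι σ hσ p, sigma_barL ι σ hσ q] at hτ
  have key : p * barL ι q = (C k * T j) * (barL ι p * q) := by
    apply hinj
    rw [map_mul, map_mul, map_mul A (barL ι p) q]
    rw [← mul_div_assoc, div_eq_div_iff hAq hAbq] at hτ
    rw [hτ, mul_assoc]
  obtain ⟨h1ne, h1⟩ := highExp_mul p (barL ι q) hp hbq
  obtain ⟨h2ne, h2⟩ := highExp_mul (barL ι p) q hbp hq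
  obtain ⟨h3ne, h3⟩ := highExp_mul (C k * T j) (barL ι p * q) (CT_ne_zero k hk j) h2ne
  have e : highExp p + highExp (barL ι q) =
      highExp (C k * T j : LaurentPolynomial K) + (highExp (barL ι p) + highExp q) := by
    rw [← h1, ← h2, ← h3, key]
  rw [highExp_CT k hk j, highExp_barL ι q hq, highExp_barL ι p hp] at e
  show (degL p - degL q) % 2 = j % 2
  simp only [degL]
  omega
end

section
/- For any group π and any n ≥ 0, the quotient π_r^{(n)}/π_r^{(n+1)} of consecutive terms of the rational derived series is torsion-free abelian. -/
/-- The subgroup generated by commutators of elements of a subset `S`. -/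
def commClosure {π : Type*} [Group π] (S : Set π) : Subgroup π :=
  Subgroup.closure {x | ∃ a ∈ S, ∃ b ∈ S, x = a * b * a⁻¹ * b⁻¹}

/-- Harvey's rational derived series of a group, as a sequence of subsets:
`π_r^(0) = π` and
`π_r^(n+1) = {g ∈ π_r^(n) | g^d ∈ [π_r^(n), π_r^(n)] for some d ≠ 0}`. -/
def ratDerivedSet (π : Type*) [Group π] : ℕ → Set π
  | 0 => Set.univ
  | n + 1 => {g | g ∈ ratDerivedSet π n ∧
      ∃ d : ℤ, d ≠ 0 ∧ g ^ d ∈ commClosure (ratDerivedSet π n)}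



section
variable (α : Type*) [Group α]

theorem of_eq_one_iff (z : α) : Abelianization.of z = 1 ↔ z ∈ commutator α :=
  QuotientGroup.eq_one_iff z

/-- The rational closure of the commutator subgroup. -/
def ratSub : Subgroup α where
  carrier := {x | ∃ d : ℤ, d ≠ 0 ∧ x ^ d ∈ commutator α}
  one_mem' := ⟨1, one_ne_zero, by rw [one_zpow]; exact Subgroup.one_mem _⟩
  inv_mem' := by
    rintro x ⟨d, hd, h⟩
    exact ⟨d, hd, by rw [inv_zpow, ← zpow_neg] at *; simpa using (commutator α).inv_mem h⟩
  mul_mem' := by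
    rintro x y ⟨d, hd, hx⟩ ⟨e, he, hy⟩
    refine ⟨d * e, mul_ne_zero hd he, ?_⟩
    have key : ∀ z : α, ∀ m : ℤ, (z ^ m ∈ commutator α ↔ (Abelianization.of z) ^ m = 1) := by
      intro z m
      rw [← of_eq_one_iff, map_zpow]
    rw [key] at hx hy ⊢
    rw [map_mul, mul_zpow]
    calc (Abelianization.of x ^ (d*e)) * (Abelianization.of y) ^ (d*e)
        = ((Abelianization.of x) ^ d) ^ e * ((Abelianization.of y) ^ e) ^ d := by
          rw [← zpow_mul, ← zpow_mul, mul_comm d e]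
      _ = 1 := by rw [hx, hy, one_zpow, one_zpow, one_mul]

theorem commutator_le_ratSub : commutator α ≤ ratSub α :=
  fun x hx => ⟨1, one_ne_zero, by rwa [zpow_one]⟩

instance ratSub_normal : (ratSub α).Normal := by
  constructor
  rintro x ⟨d, hd, h⟩ g
  exact ⟨d, hd, by
    rw [conj_zpow]
    exact Subgroup.Normal.conj_mem inferInstance _ h g⟩

end

section
variable {π : Type*} [Group π]

theorem commClosure_coe (G : Subgroup π) : commClosure (G : Set π) = ⁅G, G⁆ := by
  rw [commClosure, Subgroup.commutator_def]
  congr 1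
  ext x
  constructor
  · rintro ⟨a, ha, b, hb, rfl⟩
    exact ⟨a, ha, b, hb, (commutatorElement_def a b).symm⟩
  · rintro ⟨a, ha, b, hb, rfl⟩
    exact ⟨a, ha, b, hb, (commutatorElement_def a b)⟩

theorem map_commutator_subtype (G : Subgroup π) :
    Subgroup.map G.subtype (commutator G) = commClosure (G : Set π) := by
  rw [commutator_def, Subgroup.map_commutator, ← MonoidHom.range_eq_map,
    Subgroup.range_subtype, commClosure_coe]

theorem mem_commutator_iff (G : Subgroup π) (y : G) :
    y ∈ commutator G ↔ (↑y : π) ∈ commClosure (G : Set π) := by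
  rw [← map_commutator_subtype]
  constructor
  · intro h; exact ⟨y, h, rfl⟩
  · rintro ⟨z, hz, hzz⟩
    rwa [show z = y from Subtype.ext hzz] at hz

theorem mem_ratSub_iff (G : Subgroup π) (y : G) :
    y ∈ ratSub G ↔ ∃ d : ℤ, d ≠ 0 ∧ (↑y : π) ^ d ∈ commClosure (G : Set π) := by
  constructor
  · rintro ⟨d, hd, h⟩
    exact ⟨d, hd, by rw [← SubgroupClass.coe_zpow]; exact (mem_commutator_iff G _).mp h⟩
  · rintro ⟨d, hd, h⟩
    refine ⟨d, hd, (mem_commutator_iff G _).mpr ?_⟩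
    rwa [SubgroupClass.coe_zpow]

end

theorem exists_ratDerived_subgroup (π : Type*) [Group π] (n : ℕ) :
    ∃ G : Subgroup π, (G : Set π) = ratDerivedSet π n := by
  induction n with
  | zero => exact ⟨⊤, by rw [ratDerivedSet]; exact Subgroup.coe_top⟩
  | succ n ih =>
    obtain ⟨G, hG⟩ := ih
    refine ⟨(ratSub G).map G.subtype, ?_⟩
    ext x
    rw [ratDerivedSet]
    constructor
    · rintro ⟨y, hy, rfl⟩
      replace hy := (mem_ratSub_iff G y).mp hy
      exact ⟨hG ▸ y.2, hG ▸ hy⟩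
    · rintro ⟨hx, d, hd, h⟩
      have hxG : x ∈ G := by rw [← SetLike.mem_coe, hG]; exact hx
      exact ⟨⟨x, hxG⟩, (mem_ratSub_iff G ⟨x, hxG⟩).mpr ⟨d, hd, by rw [hG]; exact h⟩, rfl⟩

theorem ratDerived_quotient_torsionFree_abelian' (π : Type*) [Group π] (n : ℕ) :
    ∃ G : Subgroup π, (G : Set π) = ratDerivedSet π n ∧
      ∃ N : Subgroup G, (N : Set G) = Subtype.val ⁻¹' ratDerivedSet π (n + 1) ∧
        N.Normal ∧
        (∀ a b : G, (QuotientGroup.mk (a * b) : G ⧸ N) = QuotientGroup.mk (b * a)) ∧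
        (∀ (a : G) (k : ℤ), k ≠ 0 →
          (QuotientGroup.mk (a ^ k) : G ⧸ N) = QuotientGroup.mk 1 →
          (QuotientGroup.mk a : G ⧸ N) = QuotientGroup.mk 1) := by
  obtain ⟨G, hG⟩ := exists_ratDerived_subgroup π n
  refine ⟨G, hG, ratSub G, ?_, ratSub_normal G, ?_, ?_⟩
  · ext y
    simp only [SetLike.mem_coe, Set.mem_preimage]
    rw [mem_ratSub_iff G y, ratDerivedSet]
    constructor
    · rintro ⟨d, hd, h⟩
      exact ⟨hG ▸ y.2, d, hd, hG ▸ h⟩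
    · rintro ⟨-, d, hd, h⟩
      exact ⟨d, hd, by rw [hG]; exact h⟩
  · intro a b
    rw [QuotientGroup.eq]
    refine commutator_le_ratSub G ?_
    open scoped commutatorElement in
    have : (a * b)⁻¹ * (b * a) = ⁅b⁻¹, a⁻¹⁆ := by
      rw [commutatorElement_def]; group
    rw [this, commutator_def]
    exact Subgroup.commutator_mem_commutator (Subgroup.mem_top _) (Subgroup.mem_top _)
  · intro a k hk h
    rw [QuotientGroup.mk_one, QuotientGroup.eq_one_iff] at h ⊢
    obtain ⟨d, hd, hh⟩ := h
    exact ⟨k * d, mul_ne_zero hk hd, by rw [zpow_mul]; exact hh⟩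

/-- for any group `π` and any `n ≥ 0`, the terms `π_r^(n)` and `π_r^(n+1)` of
the rational derived series are subgroups, `π_r^(n+1)` is normal in `π_r^(n)`, and the
quotient `π_r^(n)/π_r^(n+1)` is torsion-free abelian. -/
theorem ratDerived_quotient_torsionFree_abelian (π : Type*) [Group π] (n : ℕ) :
    ∃ G : Subgroup π, (G : Set π) = ratDerivedSet π n ∧
      ∃ N : Subgroup G, (N : Set G) = Subtype.val ⁻¹' ratDerivedSet π (n + 1) ∧
        N.Normal ∧
        (∀ a b : G, (QuotientGroup.mk (a * b) : G ⧸ N) = QuotientGroup.mk (b * a)) ∧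
        (∀ (a : G) (k : ℤ), k ≠ 0 →
          (QuotientGroup.mk (a ^ k) : G ⧸ N) = QuotientGroup.mk 1 →
          (QuotientGroup.mk a : G ⧸ N) = QuotientGroup.mk 1) := by
  exact ratDerived_quotient_torsionFree_abelian' π n
end

section
/- Let π be a group with rank(H_1(π)) = 1, let φ: π → ℤ be an epimorphism, and suppose π_r^{(1)}/[π_r^{(1)}, π_r^{(1)}] ⊗ ℚ = 0. Then π_r^{(1)} = π_r^{(n)} for all n ≥ 1; in particular π/π_r^{(n)} ≅ ℤ is cyclic for all n ≥ 1. -/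
open scoped TensorProduct

instance : Module.Flat ℤ ℚ := IsLocalization.flat ℚ (nonZeroDivisors ℤ)

lemma torsion_of_tmul_eq_zero {A : Type*} [AddCommGroup A] (a : A)
    (h : (1:ℚ) ⊗ₜ[ℤ] a = 0) : ∃ d : ℤ, d ≠ 0 ∧ d • a = 0 := by
  by_contra hc
  push_neg at hc
  have hinj : Function.Injective (LinearMap.toSpanSingleton ℤ A a) := by
    intro x y hxy
    have : (x - y) • a = 0 := by
      simp only [LinearMap.toSpanSingleton_apply] at hxy
      rw [sub_smul, hxy, sub_self]
    by_contra hne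
    exact (hc (x - y) (sub_ne_zero.mpr hne)) this
  have h2 := Module.Flat.lTensor_preserves_injective_linearMap (M := ℚ)
    (LinearMap.toSpanSingleton ℤ A a) hinj
  have h3 : (LinearMap.toSpanSingleton ℤ A a).lTensor ℚ ((1:ℚ) ⊗ₜ[ℤ] (1:ℤ)) = 0 := by
    rw [LinearMap.lTensor_tmul]
    simpa using h
  have h4 : ((1:ℚ) ⊗ₜ[ℤ] (1:ℤ)) = (0 : ℚ ⊗[ℤ] ℤ) := by
    apply h2; simpa using h3
  have h5 := congrArg (TensorProduct.rid ℤ ℚ) h4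
  simp at h5

lemma inj_of_rank_one {V : Type*} [AddCommGroup V] [Module ℚ V]
    (hV : Module.rank ℚ V = 1) (ψ : V →ₗ[ℚ] ℚ) (hs : Function.Surjective ψ) :
    Function.Injective ψ := by
  have hfin : Module.Finite ℚ V := Module.finite_of_rank_eq_one hV
  have hf : Module.finrank ℚ V = 1 := Module.rank_eq_one_iff_finrank_eq_one.mp hV
  exact (LinearMap.injective_iff_surjective_of_finrank_eq_finrank
    (by simp [hf])).mpr hs

lemma zsmul_abel_eq_zero_iff {G : Type*} [Group G] (g : G) (d : ℤ) :
    d • Additive.ofMul (Abelianization.of g) = 0 ↔ g ^ d ∈ commutator G := by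
  rw [← ofMul_zpow, ofMul_eq_zero, ← map_zpow]
  exact QuotientGroup.eq_one_iff _

lemma commClosure_univ {π : Type*} [Group π] :
    commClosure (Set.univ : Set π) = commutator π := by
  rw [commutator_eq_closure, commClosure]
  congr 1
  ext x
  constructor
  · rintro ⟨a, -, b, -, rfl⟩
    exact ⟨a, b, (commutatorElement_def a b)⟩
  · rintro ⟨a, b, rfl⟩
    exact ⟨a, trivial, b, trivial, (commutatorElement_def a b)⟩

lemma mem_ratDerivedSet_one {π : Type*} [Group π] (g : π) :
    g ∈ ratDerivedSet π 1 ↔ ∃ d : ℤ, d ≠ 0 ∧ g ^ d ∈ commutator π := by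
  show (g ∈ ratDerivedSet π 0 ∧ _) ↔ _
  rw [show ratDerivedSet π 0 = Set.univ from rfl, commClosure_univ]
  simp

lemma map_commutator_le {π : Type*} [Group π] (G : Subgroup π) :
    Subgroup.map G.subtype (commutator G) ≤ commClosure (G : Set π) := by
  rw [commutator_eq_closure, MonoidHom.map_closure]
  apply Subgroup.closure_mono
  rintro x ⟨y, ⟨a, b, rfl⟩, rfl⟩
  exact ⟨a, a.2, b, b.2, by simp [commutatorElement_def]⟩

/-- if `rank H₁(π) = 1`, `φ : π → ℤ` is an epimorphism, and the rationalized
abelianization of `π_r^(1)` vanishes, then `π_r^(n) = π_r^(1)` for all `n ≥ 1`; in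
particular `π/π_r^(n) ≅ ℤ` is cyclic for all `n ≥ 1`. -/
theorem ratDerived_stabilizes (π : Type*) [Group π]
    (hrk : Module.rank ℚ (ℚ ⊗[ℤ] Additive (Abelianization π)) = 1)
    (φ : π →* Multiplicative ℤ) (hφ : Function.Surjective φ)
    (hδ : ∀ G : Subgroup π, (G : Set π) = ratDerivedSet π 1 →
      Subsingleton (ℚ ⊗[ℤ] Additive (Abelianization G))) :
    (∀ n : ℕ, 1 ≤ n → ratDerivedSet π n = ratDerivedSet π 1) ∧
    (∀ n : ℕ, 1 ≤ n → ∀ N : Subgroup π, (N : Set π) = ratDerivedSet π n →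
      ∀ [N.Normal], Nonempty ((π ⧸ N) ≃* Multiplicative ℤ)) := by
  classical
  let Φ : Abelianization π →* Multiplicative ℤ := Abelianization.lift φ
  let f0 : Additive (Abelianization π) →+ ℤ := MonoidHom.toAdditiveLeft Φ
  let f : Additive (Abelianization π) →ₗ[ℤ] ℤ := f0.toIntLinearMap
  let ψ : (ℚ ⊗[ℤ] Additive (Abelianization π)) →ₗ[ℚ] ℚ :=
    (TensorProduct.AlgebraTensorModule.rid ℤ ℚ ℚ).toLinearMap ∘ₗ f.baseChange ℚ
  have hψt : ∀ g : π, ψ ((1:ℚ) ⊗ₜ[ℤ] Additive.ofMul (Abelianization.of g))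
      = ((φ g).toAdd : ℚ) := by
    intro g
    simp [ψ, f, f0, Φ, LinearMap.baseChange_tmul]
  have hψs : Function.Surjective ψ := by
    obtain ⟨g0, hg0⟩ := hφ (Multiplicative.ofAdd 1)
    intro q
    refine ⟨q • ((1:ℚ) ⊗ₜ[ℤ] Additive.ofMul (Abelianization.of g0)), ?_⟩
    rw [map_smul, hψt, hg0]
    simp
  have hψi : Function.Injective ψ := inj_of_rank_one hrk ψ hψs
  have hker : ∀ g : π, φ g = 1 ↔ g ∈ ratDerivedSet π 1 := by
    intro g
    constructor
    · intro hg
      rw [mem_ratDerivedSet_one]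
      have h0 : ψ ((1:ℚ) ⊗ₜ[ℤ] Additive.ofMul (Abelianization.of g)) = 0 := by
        rw [hψt, hg]; simp
      have h1 : (1:ℚ) ⊗ₜ[ℤ] Additive.ofMul (Abelianization.of g) = 0 := by
        apply hψi; rw [h0, map_zero]
      obtain ⟨d, hd, hda⟩ := torsion_of_tmul_eq_zero _ h1
      exact ⟨d, hd, (zsmul_abel_eq_zero_iff g d).mp hda⟩
    · rw [mem_ratDerivedSet_one]
      rintro ⟨d, hd, hgd⟩
      have h1 : φ (g ^ d) = 1 := Abelianization.commutator_subset_ker φ hgd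
      rw [map_zpow] at h1
      have h2 : d • (φ g).toAdd = 0 := by
        have := congrArg Multiplicative.toAdd h1
        simpa [toAdd_zpow] using this
      rcases smul_eq_zero.mp h2 with h | h
      · exact absurd h hd
      · rwa [toAdd_eq_zero] at h
  have hset1 : (↑φ.ker : Set π) = ratDerivedSet π 1 := by
    ext g
    exact MonoidHom.mem_ker.trans (hker g)
  have hstep : ratDerivedSet π 2 = ratDerivedSet π 1 := by
    apply Set.eq_of_subset_of_subset
    · intro g hg
      exact hg.1
    · intro g hg
      have hSub := hδ φ.ker hset1
      have hgk : g ∈ φ.ker := by rw [← hset1] at hg; exact hg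
      set x : φ.ker := ⟨g, hgk⟩ with hx
      have h1 : (1:ℚ) ⊗ₜ[ℤ] Additive.ofMul (Abelianization.of x) = 0 :=
        Subsingleton.elim _ _
      obtain ⟨d, hd, hda⟩ := torsion_of_tmul_eq_zero _ h1
      have hxd : x ^ d ∈ commutator φ.ker := (zsmul_abel_eq_zero_iff x d).mp hda
      refine ⟨hg, d, hd, ?_⟩
      have : g ^ d ∈ commClosure (↑φ.ker : Set π) :=
        map_commutator_le φ.ker ⟨x ^ d, hxd, by simp [hx]⟩
      rwa [hset1] at this
  have hall : ∀ n, 1 ≤ n → ratDerivedSet π n = ratDerivedSet π 1 := by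
    intro n hn
    induction n with
    | zero => omega
    | succ m ih =>
      rcases Nat.lt_or_ge 1 (m + 1) with h | h
      · have hm : 1 ≤ m := by omega
        have h2 : ratDerivedSet π (m+1) = ratDerivedSet π 2 := by
          show {g | g ∈ ratDerivedSet π m ∧
            ∃ d : ℤ, d ≠ 0 ∧ g ^ d ∈ commClosure (ratDerivedSet π m)} = _
          rw [ih hm]
          rfl
        rw [h2, hstep]
      · have : m = 0 := by omega
        rw [this]
  refine ⟨hall, ?_⟩
  intro n hn N hN _
  have hNk : N = φ.ker := by
    apply SetLike.ext'
    rw [hN, hall n hn, ← hset1]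
  subst hNk
  exact ⟨QuotientGroup.quotientKerEquivOfSurjective φ hφ⟩
end
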